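/- Let n ≥ 3 and let j be a proper divisor of n with both j and k = n/j even. Let ℓ₋^j(n) = {X ∈ S^{n−2} : ℛ_n^j X = −X}, with the subspace topology. Define H : ℂ^{j/2} → ℂ^{j/2} by H(z₁, …, z_{j/2}) = (e^{2πi·1/(2j)}·z₁, e^{2πi·3/(2j)}·z₂, …, e^{2πi(j−1)/(2j)}·z_{j/2}). Then the quotient of ℓ₋^j(n) by the equivalence relation X ≈ Y iff Y = ±ℛ_n^l X for some l ∈ ℤ is homeomorphic to the quotient of the unit sphere S^{j−1} ⊆ ℂ^{j/2} by the relation z ≈_H w iff w = H^l(z) for some l ∈ ℤ (i.e., ℓ₋^j(n)/⟨ℛ_n, ν⟩ is homeomorphic to the orbifold lens space L_{2j}(1, 3, 5, …, j−1)). -/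

import Mathlib

noncomputable section

/-- The block-rotation matrix `ℛ_n`: block diagonal with `2 × 2` rotation blocks
`R_{2π/n}, R_{2·2π/n}, …` (the block with index `b` rotates by `(b+1)·2π/n`), followed,
when `n` is even, by a final `1 × 1` entry `−1`. -/
def Rmat (n : ℕ) : Matrix (Fin (n - 1)) (Fin (n - 1)) ℝ :=
  Matrix.of fun i j =>
    let b : ℕ := (i : ℕ) / 2
    let θ : ℝ := 2 * Real.pi * ((b : ℝ) + 1) / n
    if (i : ℕ) % 2 = 0 then
      if (i : ℕ) + 1 < n - 1 then
        if (j : ℕ) = (i : ℕ) then Real.cos θ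
        else if (j : ℕ) = (i : ℕ) + 1 then -Real.sin θ else 0
      else
        if j = i then -1 else 0
    else
      if (j : ℕ) = (i : ℕ) - 1 then Real.sin θ
      else if (j : ℕ) = (i : ℕ) then Real.cos θ else 0

def th (n b : ℕ) : ℝ := 2 * Real.pi * ((b : ℝ) + 1) / n

lemma row2 {m : ℕ} (X : Fin m → ℝ) (a b : Fin m) (hab : a ≠ b) (u v : ℝ) :
    ∑ x, (if x = a then u else if x = b then v else 0) * X x = u * X a + v * X b := by
  have key : ∀ x, (if x = a then u else if x = b then v else 0) * X x
      = (if x = a then u * X a else 0) + (if x = b then v * X b else 0) := by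
    intro x
    by_cases hxa : x = a
    · subst hxa; simp [hab]
    · by_cases hxb : x = b
      · subst hxb; simp [hxa, Ne.symm hab]
      · simp [hxa, hxb]
  simp [key, Finset.sum_add_distrib]

lemma mulVec_even (n : ℕ) (X : Fin (n-1) → ℝ) (b : ℕ) (hb : 2*b+1 < n-1) :
    (Rmat n).mulVec X ⟨2*b, by omega⟩ =
      Real.cos (th n b) * X ⟨2*b, by omega⟩ - Real.sin (th n b) * X ⟨2*b+1, hb⟩ := by
  classical
  have h : (Rmat n).mulVec X ⟨2*b, by omega⟩ = ∑ x, Rmat n ⟨2*b, by omega⟩ x * X x := by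
    simp [Matrix.mulVec, dotProduct]
  rw [h]
  have hrow : ∀ x : Fin (n-1), Rmat n ⟨2*b, by omega⟩ x
      = (if x = (⟨2*b, by omega⟩ : Fin (n-1)) then Real.cos (th n b)
        else if x = (⟨2*b+1, hb⟩ : Fin (n-1)) then -Real.sin (th n b) else 0) := by
    intro x
    simp only [Rmat, Matrix.of_apply, th]
    have h0 : (2*b) % 2 = 0 := by omega
    have hdiv : (2*b) / 2 = b := by omega
    simp only [h0, hdiv, if_pos rfl, if_pos hb, Fin.ext_iff]
    rfl
  rw [Finset.sum_congr rfl (fun x _ => by rw [hrow x])]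
  rw [row2 X _ _ (by simp [Fin.ext_iff]) _ _]
  ring

lemma mulVec_odd (n : ℕ) (X : Fin (n-1) → ℝ) (b : ℕ) (hb : 2*b+1 < n-1) :
    (Rmat n).mulVec X ⟨2*b+1, hb⟩ =
      Real.sin (th n b) * X ⟨2*b, by omega⟩ + Real.cos (th n b) * X ⟨2*b+1, hb⟩ := by
  classical
  have h : (Rmat n).mulVec X ⟨2*b+1, hb⟩ = ∑ x, Rmat n ⟨2*b+1, hb⟩ x * X x := by
    simp [Matrix.mulVec, dotProduct]
  rw [h]
  have hrow : ∀ x : Fin (n-1), Rmat n ⟨2*b+1, hb⟩ x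
      = (if x = (⟨2*b, by omega⟩ : Fin (n-1)) then Real.sin (th n b)
        else if x = (⟨2*b+1, hb⟩ : Fin (n-1)) then Real.cos (th n b) else 0) := by
    intro x
    simp only [Rmat, Matrix.of_apply, th]
    have h0 : ¬ ((2*b+1) % 2 = 0) := by omega
    have hdiv : (2*b+1) / 2 = b := by omega
    have hsub : 2*b+1-1 = 2*b := by omega
    simp only [h0, hdiv, hsub, if_neg, Fin.ext_iff]
    rfl
  rw [Finset.sum_congr rfl (fun x _ => by rw [hrow x])]
  rw [row2 X _ _ (by simp [Fin.ext_iff]) _ _]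

lemma mulVec_last (n : ℕ) (hn : 2 ≤ n) (hne : Even n) (X : Fin (n-1) → ℝ) :
    (Rmat n).mulVec X ⟨n-2, by omega⟩ = - X ⟨n-2, by omega⟩ := by
  classical
  have h : (Rmat n).mulVec X ⟨n-2, by omega⟩ = ∑ x, Rmat n ⟨n-2, by omega⟩ x * X x := by
    simp [Matrix.mulVec, dotProduct]
  rw [h]
  have hrow : ∀ x : Fin (n-1), Rmat n ⟨n-2, by omega⟩ x
      = (if x = (⟨n-2, by omega⟩ : Fin (n-1)) then (-1 : ℝ)
        else if x = (⟨n-2, by omega⟩ : Fin (n-1)) then 0 else 0) := by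
    intro x
    simp only [Rmat, Matrix.of_apply]
    obtain ⟨m, hm⟩ := hne
    have h0 : (n-2) % 2 = 0 := by omega
    have h1 : ¬ ((n-2) + 1 < n - 1) := by omega
    simp only [h0, if_pos rfl, if_neg h1]
    by_cases hx : x = (⟨n-2, by omega⟩ : Fin (n-1)) <;> simp [hx]
  rw [Finset.sum_congr rfl (fun x _ => by rw [hrow x])]
  simp [row2]

lemma pow_mulVec_pair (n : ℕ) (p : ℕ) (X : Fin (n-1) → ℝ) (b : ℕ) (hb : 2*b+1 < n-1) :
    ((Rmat n ^ p).mulVec X) ⟨2*b, by omega⟩ =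
      Real.cos (p * th n b) * X ⟨2*b, by omega⟩ - Real.sin (p * th n b) * X ⟨2*b+1, hb⟩ ∧
    ((Rmat n ^ p).mulVec X) ⟨2*b+1, hb⟩ =
      Real.sin (p * th n b) * X ⟨2*b, by omega⟩ + Real.cos (p * th n b) * X ⟨2*b+1, hb⟩ := by
  induction p with
  | zero => simp [Matrix.one_mulVec]
  | succ p ih =>
    have hsplit : ((p:ℝ)+1) * th n b = p * th n b + th n b := by ring
    have hre : (((p+1 : ℕ)):ℝ) = (p:ℝ)+1 := by push_cast; ring
    rw [pow_succ']
    rw [← Matrix.mulVec_mulVec]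
    constructor
    · rw [mulVec_even n _ b hb, ih.1, ih.2, hre, hsplit, Real.cos_add, Real.sin_add]; ring
    · rw [mulVec_odd n _ b hb, ih.1, ih.2, hre, hsplit, Real.cos_add, Real.sin_add]; ring

lemma pow_mulVec_last (n : ℕ) (hn : 2 ≤ n) (hne : Even n) (p : ℕ) (X : Fin (n-1) → ℝ) :
    ((Rmat n ^ p).mulVec X) ⟨n-2, by omega⟩ = (-1)^p * X ⟨n-2, by omega⟩ := by
  induction p with
  | zero => simp [Matrix.one_mulVec]
  | succ p ih =>
    rw [pow_succ', ← Matrix.mulVec_mulVec, mulVec_last n hn hne, ih, pow_succ]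
    ring

lemma pow_n_mulVec (n : ℕ) (hn : 2 ≤ n) (hne : Even n) (X : Fin (n-1) → ℝ) :
    (Rmat n ^ n).mulVec X = X := by
  funext i
  rcases i with ⟨iv, hi⟩
  by_cases hlast : iv = n - 2
  · subst hlast
    rw [pow_mulVec_last n hn hne n X, hne.neg_one_pow, one_mul]
  · have hiv : iv < n - 2 := by omega
    have hcs : Real.cos ((n : ℝ) * th n (iv/2)) = 1 ∧ Real.sin ((n:ℝ) * th n (iv/2)) = 0 := by
      have harg : (n : ℝ) * th n (iv/2) = ((iv/2 + 1 : ℕ) : ℝ) * (2 * Real.pi) := by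
        unfold th
        have hn0 : (n : ℝ) ≠ 0 := by positivity
        field_simp
        push_cast
        ring
      constructor
      · rw [harg, Real.cos_nat_mul_two_pi]
      · rw [harg]
        have : ((iv/2 + 1 : ℕ) : ℝ) * (2 * Real.pi) = ((2*(iv/2 + 1) : ℕ) : ℝ) * Real.pi := by
          push_cast; ring
        rw [this, Real.sin_nat_mul_pi]
    rcases Nat.even_or_odd iv with he | ho
    · obtain ⟨b, hb⟩ := he
      have hb' : iv = 2 * b := by omega
      subst hb'
      have h2b : 2*b+1 < n-1 := by omega
      have := (pow_mulVec_pair n n X b h2b).1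
      have hdiv : 2*b/2 = b := by omega
      rw [hdiv] at hcs
      rw [this, hcs.1, hcs.2]; ring
    · obtain ⟨b, hb⟩ := ho
      subst hb
      have h2b : 2*b+1 < n-1 := by omega
      have := (pow_mulVec_pair n n X b h2b).2
      have hdiv : (2*b+1)/2 = b := by omega
      rw [hdiv] at hcs
      rw [this, hcs.1, hcs.2]; ring

lemma Rmat_pow_n (n : ℕ) (hn : 2 ≤ n) (hne : Even n) : Rmat n ^ n = 1 := by
  have h := pow_n_mulVec n hn hne
  apply Matrix.ext
  intro i j
  have := congrFun (h (Pi.single j 1)) i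
  rw [Matrix.mulVec_single] at this
  by_cases hij : i = j
  · subst hij; simpa using this
  · simp only [Matrix.one_apply_ne hij]
    simpa [Pi.single_apply, hij] using this

lemma Rmat_det_isUnit (n : ℕ) (hn : 2 ≤ n) (hne : Even n) : IsUnit (Rmat n).det := by
  have h1 : (Rmat n).det ^ n = 1 := by
    rw [← Matrix.det_pow, Rmat_pow_n n hn hne, Matrix.det_one]
  apply IsUnit.of_mul_eq_one ((Rmat n).det ^ (n-1))
  rw [← pow_succ']
  have : n - 1 + 1 = n := by omega
  rw [this, h1]

lemma Rmat_zpow_eq (n : ℕ) (hn : 2 ≤ n) (hne : Even n) (l : ℤ) :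
    Rmat n ^ l = Rmat n ^ (l % n).toNat := by
  have hd := Rmat_det_isUnit n hn hne
  have hmod : l = (n : ℤ) * (l / n) + l % n := (Int.mul_ediv_add_emod l n).symm
  calc Rmat n ^ l = Rmat n ^ ((n:ℤ) * (l / n) + l % n) := by rw [← hmod]
    _ = Rmat n ^ ((n:ℤ) * (l / n)) * Rmat n ^ (l % n) := Matrix.zpow_add hd _ _
    _ = (Rmat n ^ (n:ℤ)) ^ (l / n) * Rmat n ^ (l % n) := by rw [Matrix.zpow_mul _ hd]
    _ = Rmat n ^ (l % n).toNat := by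
        rw [zpow_natCast, Rmat_pow_n n hn hne, Matrix.one_zpow, one_mul]
        rw [show l % n = ((l % n).toNat : ℤ) from (Int.toNat_of_nonneg (Int.emod_nonneg l (by positivity))).symm]
        exact zpow_natCast _ _

section Main

variable {n j k : ℕ}

/-- goodness of a block index -/
def goodb (k b : ℕ) : Prop := ∃ s : ℕ, b + 1 = (2*s+1)*(k/2)

lemma trig_good (hn : n = j * k) (hj2 : 2 ≤ j) (hke : Even k) (hk2 : 2 ≤ k)
    {b : ℕ} (hb : goodb k b) :
    Real.cos ((j : ℝ) * th n b) = -1 ∧ Real.sin ((j : ℝ) * th n b) = 0 := by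
  obtain ⟨s, hs⟩ := hb
  obtain ⟨k2, hk2'⟩ := hke
  have hk' : 2 * (k/2) = k := by omega
  have hj0 : (j : ℝ) ≠ 0 := by positivity
  have hk20 : ((k/2 : ℕ) : ℝ) ≠ 0 := by
    have : 1 ≤ k / 2 := by omega
    positivity
  have harg : (j : ℝ) * th n b = (s : ℝ) * (2 * Real.pi) + Real.pi := by
    unfold th
    have hbr : ((b:ℝ) + 1) = (2*(s:ℝ)+1) * ((k/2 : ℕ) : ℝ) := by exact_mod_cast hs
    have hnn : n = j * (2 * (k/2)) := by rw [hk']; exact hn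
    have hnr : (n : ℝ) = (j : ℝ) * (2 * ((k/2 : ℕ) : ℝ)) := by
      rw [hnn]; push_cast; ring
    rw [hbr, hnr, mul_div_assoc', div_eq_iff
      (mul_ne_zero hj0 (mul_ne_zero two_ne_zero hk20))]
    ring
  rw [harg]
  constructor
  · rw [Real.cos_add_pi, Real.cos_nat_mul_two_pi]
  · rw [Real.sin_add_pi]
    have : (s : ℝ) * (2 * Real.pi) = ((2*s : ℕ) : ℝ) * Real.pi := by push_cast; ring
    rw [this, Real.sin_nat_mul_pi, neg_zero]

lemma trig_bad (hn : n = j * k) (hj2 : 2 ≤ j) (hke : Even k) (hk2 : 2 ≤ k)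
    {b : ℕ} (hb : ¬ goodb k b) :
    Real.cos ((j : ℝ) * th n b) ≠ -1 := by
  intro hc
  obtain ⟨k2, hk2'⟩ := hke
  have hsin : Real.sin ((j : ℝ) * th n b) = 0 := by
    have h1 := Real.sin_sq_add_cos_sq ((j : ℝ) * th n b)
    have h2 : Real.sin ((j : ℝ) * th n b) ^ 2 = 0 := by rw [hc] at h1; nlinarith
    exact pow_eq_zero_iff (by norm_num) |>.mp h2
  obtain ⟨m, hm⟩ := Real.sin_eq_zero_iff.mp hsin
  have hk0 : (k : ℝ) ≠ 0 := by positivity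
  have hj0 : (j : ℝ) ≠ 0 := by positivity
  have hpi : Real.pi ≠ 0 := Real.pi_ne_zero
  have harg : (j : ℝ) * th n b = 2 * Real.pi * ((b:ℝ)+1) / k := by
    unfold th
    rw [hn]
    push_cast
    rw [mul_div_assoc', mul_div_mul_left _ _ hj0]
  -- from hm and harg : m * π = 2π(b+1)/k
  have hm2 : (m : ℝ) * Real.pi = 2 * Real.pi * ((b:ℝ)+1) / k := by rw [hm, harg]
  rw [eq_div_iff hk0] at hm2
  have h0 : ((m:ℝ) * k - 2*((b:ℝ)+1)) * Real.pi = 0 := by linear_combination hm2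
  have hmk : (m : ℝ) * k = 2 * ((b:ℝ) + 1) := by
    rcases mul_eq_zero.mp h0 with h | h
    · linarith
    · exact absurd h hpi
  have hmkz : m * (k : ℤ) = 2 * ((b : ℤ) + 1) := by exact_mod_cast hmk
  -- m is odd since cos = -1
  have hcosm : Real.cos ((m:ℝ) * Real.pi) = (-1 : ℝ) ^ m := by
    simpa using Real.cos_int_mul_pi_sub 0 m
  have hcos : ((-1 : ℝ)) ^ m = -1 := by rw [← hcosm, hm, hc]
  have hmodd : Odd m := by
    rcases Int.even_or_odd m with he | ho
    · exfalso; rw [he.neg_one_zpow] at hcos; norm_num at hcos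
    · exact ho
  obtain ⟨c, hcc⟩ := hmodd
  have hkz : (2:ℤ) ≤ (k:ℤ) := by exact_mod_cast hk2
  have hbz : (0:ℤ) ≤ (b:ℤ) := Int.natCast_nonneg b
  have hcpos : 0 ≤ c := by
    by_contra hneg
    have hm1 : m ≤ -1 := by omega
    have := mul_le_mul_of_nonneg_right hm1 (by linarith : (0:ℤ) ≤ (k:ℤ))
    nlinarith
  obtain ⟨cn, rfl⟩ := Int.eq_ofNat_of_zero_le hcpos
  apply hb
  refine ⟨cn, ?_⟩
  have h1 : (2*(cn:ℤ)+1) * (k:ℤ) = 2 * ((b:ℤ)+1) := by rw [hcc] at hmkz; linarith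
  have hk'' : (k : ℤ) = 2 * ((k/2 : ℕ) : ℤ) := by
    have h2 : 2 * (k/2) = k := by omega
    exact_mod_cast h2.symm
  rw [hk''] at h1
  have h3 : (2*(cn:ℤ)+1) * ((k/2 : ℕ) : ℤ) = (b:ℤ)+1 := by linarith
  exact_mod_cast h3.symm

end Main

section Main2

variable {n j k : ℕ}

lemma last_bad (hn : n = j * k) (hj2 : 2 ≤ j) (hje : Even j) (hke : Even k) (hk2 : 2 ≤ k) :
    ¬ goodb k ((n-2)/2) := by
  rintro ⟨s, hs⟩
  obtain ⟨K0, hK0⟩ := hke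
  have hkK : k = 2 * (k/2) := by omega
  have hprod : n = 2 * (j * (k/2)) := by
    rw [hn]
    conv_lhs => rw [hkK]
    ring
  have ha1 : 1 ≤ j * (k/2) := Nat.one_le_iff_ne_zero.mpr
    (Nat.mul_ne_zero (by omega) (by omega))
  have hs' : j * (k/2) = (2*s+1) * (k/2) := by omega
  have hk2pos : 0 < k/2 := by omega
  have : j = 2*s+1 := Nat.eq_of_mul_eq_mul_right hk2pos hs'
  obtain ⟨j2, hj2'⟩ := hje
  omega

lemma good_of_idx {b s : ℕ} (hke : Even k) (hk2 : 2 ≤ k)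
    (h : 2*b = (2*s+1)*k - 2 ∨ 2*b+1 = (2*s+1)*k - 1) : goodb k b := by
  refine ⟨s, ?_⟩
  obtain ⟨K0, hK0⟩ := hke
  have hkK : k = 2 * (k/2) := by omega
  have hprod : (2*s+1) * k = 2 * ((2*s+1) * (k/2)) := by
    conv_lhs => rw [hkK]
    ring
  have ha1 : 1 ≤ (2*s+1) * (k/2) := Nat.one_le_iff_ne_zero.mpr
    (Nat.mul_ne_zero (by omega) (by omega))
  omega

lemma idx_of_good (hn : n = j * k) (hj2 : 2 ≤ j) (hje : Even j) (hke : Even k) (hk2 : 2 ≤ k)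
    {b : ℕ} (hb : 2*b+1 < n-1) (hg : goodb k b) :
    ∃ s : ℕ, s < j/2 ∧ 2*b = (2*s+1)*k - 2 ∧ 2*b+1 = (2*s+1)*k - 1 := by
  obtain ⟨s, hs⟩ := hg
  obtain ⟨K0, hK0⟩ := hke
  have hkK : k = 2 * (k/2) := by omega
  have hprod : (2*s+1) * k = 2 * ((2*s+1) * (k/2)) := by
    conv_lhs => rw [hkK]
    ring
  have ha1 : 1 ≤ (2*s+1) * (k/2) := Nat.one_le_iff_ne_zero.mpr
    (Nat.mul_ne_zero (by omega) (by omega))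
  refine ⟨s, ?_, ?_, ?_⟩
  · -- bound : s < j/2
    by_contra hsc
    have hs2 : j + 1 ≤ 2*s + 1 := by
      obtain ⟨j2, hj2'⟩ := hje
      omega
    have hmul : (j+1) * k ≤ (2*s+1) * k := Nat.mul_le_mul_right _ hs2
    have hnb : 2*(b+1) = (2*s+1)*k := by omega
    have : (j+1)*k = j*k + k := by ring
    omega
  · omega
  · omega

lemma supp_mulVec_zero (hn : n = j * k) (hj2 : 2 ≤ j) (hje : Even j) (hke : Even k)
    (hk2 : 2 ≤ k) (X : Fin (n-1) → ℝ)
    (hX : ∀ i : Fin (n-1), ¬ goodb k ((i:ℕ)/2) → X i = 0)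
    (p : ℕ) (i : Fin (n-1)) (hbad : ¬ goodb k ((i:ℕ)/2)) :
    ((Rmat n ^ p).mulVec X) i = 0 := by
  have hn4 : 4 ≤ n := by
    calc 4 = 2 * 2 := rfl
    _ ≤ j * k := Nat.mul_le_mul hj2 hk2
    _ = n := hn.symm
  have hne : Even n := by rw [hn]; exact hke.mul_left j
  rcases i with ⟨iv, hi⟩
  by_cases hlast : iv = n - 2
  · subst hlast
    rw [pow_mulVec_last n (by omega) hne p X]
    have hz : X ⟨n-2, by omega⟩ = 0 := hX _ hbad
    rw [hz, mul_zero]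
  · have hiv : iv < n - 2 := by omega
    set b := iv / 2 with hbdef
    have h2b : 2*b+1 < n-1 := by omega
    have hx0 : X ⟨2*b, by omega⟩ = 0 := hX ⟨2*b, by omega⟩ (by
      show ¬ goodb k ((2*b)/2)
      rw [show (2*b)/2 = b from by omega]
      exact hbad)
    have hy0 : X ⟨2*b+1, h2b⟩ = 0 := hX ⟨2*b+1, h2b⟩ (by
      show ¬ goodb k ((2*b+1)/2)
      rw [show (2*b+1)/2 = b from by omega]
      exact hbad)
    rcases Nat.even_or_odd iv with he | ho
    · obtain ⟨c, hc⟩ := he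
      have hceq : iv = 2*b := by omega
      have : (⟨iv, hi⟩ : Fin (n-1)) = ⟨2*b, by omega⟩ := by simp [Fin.ext_iff, hceq]
      rw [this, (pow_mulVec_pair n p X b h2b).1, hx0, hy0]
      ring
    · obtain ⟨c, hc⟩ := ho
      have hceq : iv = 2*b+1 := by omega
      have : (⟨iv, hi⟩ : Fin (n-1)) = ⟨2*b+1, h2b⟩ := by simp [Fin.ext_iff, hceq]
      rw [this, (pow_mulVec_pair n p X b h2b).2, hx0, hy0]
      ring

lemma char_support (hn : n = j * k) (hj2 : 2 ≤ j) (hje : Even j) (hke : Even k) (hk2 : 2 ≤ k)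
    (X : Fin (n-1) → ℝ) :
    (Rmat n ^ j).mulVec X = -X ↔ ∀ i : Fin (n-1), ¬ goodb k ((i:ℕ)/2) → X i = 0 := by
  have hn4 : 4 ≤ n := by
    calc 4 = 2 * 2 := rfl
    _ ≤ j * k := Nat.mul_le_mul hj2 hk2
    _ = n := hn.symm
  have hne : Even n := by rw [hn]; exact hke.mul_left j
  constructor
  · intro h i hbad
    rcases i with ⟨iv, hi⟩
    by_cases hlast : iv = n - 2
    · have heq : (⟨iv, hi⟩ : Fin (n-1)) = ⟨n-2, by omega⟩ := by simp [Fin.ext_iff, hlast]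
      rw [heq]
      have := congrFun h ⟨n-2, by omega⟩
      rw [pow_mulVec_last n (by omega) hne j X, hje.neg_one_pow, one_mul, Pi.neg_apply] at this
      linarith
    · have hiv : iv < n - 2 := by omega
      set b := iv / 2 with hbdef
      have h2b : 2*b+1 < n-1 := by omega
      have hbadb : ¬ goodb k b := hbad
      set c := Real.cos ((j:ℝ) * th n b) with hcdef
      set s := Real.sin ((j:ℝ) * th n b) with hsdef
      have hc : c ≠ -1 := trig_bad hn hj2 hke hk2 hbadb
      have hsq : s^2 + c^2 = 1 := Real.sin_sq_add_cos_sq _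
      set x := X ⟨2*b, by omega⟩ with hxdef
      set y := X ⟨2*b+1, h2b⟩ with hydef
      have eq1 : c * x - s * y = -x := by
        have := congrFun h ⟨2*b, by omega⟩
        rwa [(pow_mulVec_pair n j X b h2b).1, Pi.neg_apply] at this
      have eq2 : s * x + c * y = -y := by
        have := congrFun h ⟨2*b+1, h2b⟩
        rwa [(pow_mulVec_pair n j X b h2b).2, Pi.neg_apply] at this
      have h2c : (2 + 2*c) ≠ 0 := fun hz => hc (by linarith)
      have hx : x = 0 := by
        have hzz : (2 + 2*c) * x = 0 := by linear_combination (c+1)*eq1 + s*eq2 - x*hsq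
        exact (mul_eq_zero.mp hzz).resolve_left h2c
      have hy : y = 0 := by
        have hzz : (2 + 2*c) * y = 0 := by linear_combination (-s)*eq1 + (c+1)*eq2 - y*hsq
        exact (mul_eq_zero.mp hzz).resolve_left h2c
      rcases Nat.even_or_odd iv with hee | ho
      · obtain ⟨cc, hcc⟩ := hee
        have hceq : iv = 2*b := by omega
        have heq : (⟨iv, hi⟩ : Fin (n-1)) = ⟨2*b, by omega⟩ := by simp [Fin.ext_iff, hceq]
        rw [heq]; exact hx
      · obtain ⟨cc, hcc⟩ := ho
        have hceq : iv = 2*b+1 := by omega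
        have heq : (⟨iv, hi⟩ : Fin (n-1)) = ⟨2*b+1, h2b⟩ := by simp [Fin.ext_iff, hceq]
        rw [heq]; exact hy
  · intro h
    funext i
    rcases i with ⟨iv, hi⟩
    rw [Pi.neg_apply]
    by_cases hgood : goodb k (iv/2)
    · -- good block: use trig_good
      have hiv : iv ≠ n - 2 := by
        intro hl
        exact last_bad hn hj2 hje hke hk2 (by rw [← hl]; exact hgood)
      have hiv2 : iv < n - 2 := by omega
      set b := iv / 2 with hbdef
      have h2b : 2*b+1 < n-1 := by omega
      obtain ⟨hcos, hsin⟩ := trig_good hn hj2 hke hk2 hgood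
      rcases Nat.even_or_odd iv with hee | ho
      · obtain ⟨cc, hcc⟩ := hee
        have hceq : iv = 2*b := by omega
        have heq : (⟨iv, hi⟩ : Fin (n-1)) = ⟨2*b, by omega⟩ := by simp [Fin.ext_iff, hceq]
        rw [heq, (pow_mulVec_pair n j X b h2b).1, hcos, hsin]
        ring
      · obtain ⟨cc, hcc⟩ := ho
        have hceq : iv = 2*b+1 := by omega
        have heq : (⟨iv, hi⟩ : Fin (n-1)) = ⟨2*b+1, h2b⟩ := by simp [Fin.ext_iff, hceq]
        rw [heq, (pow_mulVec_pair n j X b h2b).2, hcos, hsin]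
        ring
    · rw [supp_mulVec_zero hn hj2 hje hke hk2 X h j _ hgood, h _ hgood, neg_zero]

end Main2

section Main3

structure Setup (n j k : ℕ) : Prop where
  hn : n = j * k
  hj2 : 2 ≤ j
  hje : Even j
  hk2 : 2 ≤ k
  hke : Even k

variable {n j k : ℕ}

lemma Setup.idx_bound (S : Setup n j k) (t : Fin (j/2)) :
    (2*(t:ℕ)+1)*k - 1 < n - 1 ∧ 2 ≤ (2*(t:ℕ)+1)*k := by
  have ht : (t:ℕ) < j/2 := t.isLt
  have h1 : 2*(t:ℕ)+1 ≤ j - 1 := by omega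
  have h2 : (2*(t:ℕ)+1)*k ≤ (j-1)*k := Nat.mul_le_mul_right _ h1
  have h3 : (j-1)*k = j*k - 1*k := by rw [Nat.sub_mul]
  have h5 : 1*2 ≤ (2*(t:ℕ)+1)*k := Nat.mul_le_mul (by omega) S.hk2
  have hn := S.hn
  have hk2 := S.hk2
  omega

def ireF (S : Setup n j k) (t : Fin (j/2)) : Fin (n-1) :=
  ⟨(2*(t:ℕ)+1)*k - 2, by have := S.idx_bound t; omega⟩

def iimF (S : Setup n j k) (t : Fin (j/2)) : Fin (n-1) :=
  ⟨(2*(t:ℕ)+1)*k - 1, (S.idx_bound t).1⟩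

lemma Setup.double (S : Setup n j k) (t : Fin (j/2)) :
    (2*(t:ℕ)+1)*k = 2*((2*(t:ℕ)+1)*(k/2)) := by
  have hkK : k = 2 * (k/2) := by obtain ⟨K0, hK0⟩ := S.hke; have := S.hk2; omega
  conv_lhs => rw [hkK]
  ring

lemma Setup.KB (S : Setup n j k) (t : Fin (j/2)) : 1 ≤ (2*(t:ℕ)+1)*(k/2) := by
  have := S.double t
  have := (S.idx_bound t).2
  omega

lemma ireF_inj (S : Setup n j k) {t s : Fin (j/2)} (h : ireF S t = ireF S s) : t = s := by
  rw [Fin.ext_iff] at h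
  simp only [ireF] at h
  have h2 := (S.idx_bound t).2
  have h3 := (S.idx_bound s).2
  have heq : (2*(t:ℕ)+1)*k = (2*(s:ℕ)+1)*k := by omega
  have hkpos : 0 < k := by have := S.hk2; omega
  have := Nat.eq_of_mul_eq_mul_right hkpos heq
  have : (t:ℕ) = (s:ℕ) := by omega
  exact Fin.ext this

lemma iimF_inj (S : Setup n j k) {t s : Fin (j/2)} (h : iimF S t = iimF S s) : t = s := by
  rw [Fin.ext_iff] at h
  simp only [iimF] at h
  have h2 := (S.idx_bound t).2
  have h3 := (S.idx_bound s).2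
  have heq : (2*(t:ℕ)+1)*k = (2*(s:ℕ)+1)*k := by omega
  have hkpos : 0 < k := by have := S.hk2; omega
  have := Nat.eq_of_mul_eq_mul_right hkpos heq
  have : (t:ℕ) = (s:ℕ) := by omega
  exact Fin.ext this

lemma ireF_ne_iimF (S : Setup n j k) (t s : Fin (j/2)) : ireF S t ≠ iimF S s := by
  rw [Ne, Fin.ext_iff]
  simp only [ireF, iimF]
  have h1 := S.double t
  have h2 := S.double s
  have h3 := (S.idx_bound t).2
  have h4 := (S.idx_bound s).2
  omega

/-- the block of `ireF t` -/
lemma ireF_val (S : Setup n j k) (t : Fin (j/2)) :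
    ((ireF S t : ℕ)) = 2*((2*(t:ℕ)+1)*(k/2) - 1) := by
  simp only [ireF]
  have h1 := S.double t
  have h2 := S.KB t
  omega

lemma iimF_val (S : Setup n j k) (t : Fin (j/2)) :
    ((iimF S t : ℕ)) = 2*((2*(t:ℕ)+1)*(k/2) - 1) + 1 := by
  simp only [iimF]
  have h1 := S.double t
  have h2 := S.KB t
  omega

lemma good_ire (S : Setup n j k) (t : Fin (j/2)) : goodb k ((ireF S t : ℕ)/2) := by
  refine ⟨(t:ℕ), ?_⟩
  have := ireF_val S t
  have h2 := S.KB t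
  omega

lemma good_iim (S : Setup n j k) (t : Fin (j/2)) : goodb k ((iimF S t : ℕ)/2) := by
  refine ⟨(t:ℕ), ?_⟩
  have := iimF_val S t
  have h2 := S.KB t
  omega

def fwdF (S : Setup n j k) (X : Fin (n-1) → ℝ) (t : Fin (j/2)) : ℂ :=
  (X (ireF S t) : ℂ) + Complex.I * (X (iimF S t) : ℂ)

def bwdF (S : Setup n j k) (v : Fin (j/2) → ℂ) : Fin (n-1) → ℝ := fun i =>
  ∑ t, ((v t).re * (if i = ireF S t then 1 else 0) + (v t).im * (if i = iimF S t then 1 else 0))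

lemma bwdF_ire (S : Setup n j k) (v : Fin (j/2) → ℂ) (t : Fin (j/2)) :
    bwdF S v (ireF S t) = (v t).re := by
  unfold bwdF
  rw [Finset.sum_eq_single t]
  · rw [if_pos rfl, if_neg (ireF_ne_iimF S t t)]; ring
  · intro s _ hst
    have h1 : ireF S t ≠ ireF S s := fun h => hst (ireF_inj S h.symm)
    have h2 : ireF S t ≠ iimF S s := ireF_ne_iimF S t s
    simp [h1, h2]
  · intro h; exact absurd (Finset.mem_univ t) h

lemma bwdF_iim (S : Setup n j k) (v : Fin (j/2) → ℂ) (t : Fin (j/2)) :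
    bwdF S v (iimF S t) = (v t).im := by
  unfold bwdF
  rw [Finset.sum_eq_single t]
  · rw [if_neg (Ne.symm (ireF_ne_iimF S t t)), if_pos rfl]; ring
  · intro s _ hst
    have h1 : iimF S t ≠ ireF S s := Ne.symm (ireF_ne_iimF S s t)
    have h2 : iimF S t ≠ iimF S s := fun h => hst (iimF_inj S h.symm)
    simp [h1, h2]
  · intro h; exact absurd (Finset.mem_univ t) h

lemma bwdF_supp (S : Setup n j k) (v : Fin (j/2) → ℂ) (i : Fin (n-1))
    (hbad : ¬ goodb k ((i:ℕ)/2)) : bwdF S v i = 0 := by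
  unfold bwdF
  apply Finset.sum_eq_zero
  intro s _
  have h1 : i ≠ ireF S s := fun h => hbad (h ▸ good_ire S s)
  have h2 : i ≠ iimF S s := fun h => hbad (h ▸ good_iim S s)
  simp [h1, h2]

end Main3

section Main4

variable {n j k : ℕ}

lemma fwd_bwd (S : Setup n j k) (v : Fin (j/2) → ℂ) (t : Fin (j/2)) :
    fwdF S (bwdF S v) t = v t := by
  unfold fwdF
  rw [bwdF_ire, bwdF_iim]
  rw [mul_comm]
  exact Complex.re_add_im (v t)

lemma idx_cases (S : Setup n j k) (i : Fin (n-1)) (hg : goodb k ((i:ℕ)/2)) :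
    ∃ t : Fin (j/2), i = ireF S t ∨ i = iimF S t := by
  obtain ⟨s, hs⟩ := hg
  -- bound on s
  have hb : 2*((i:ℕ)/2)+1 < n-1 ∨ (i:ℕ) = n-2 := by
    rcases Nat.lt_or_ge (i:ℕ) (n-2) with h | h
    · left; omega
    · right; have := i.isLt; omega
  rcases hb with hb | hlast
  · obtain ⟨s', hs', h1, h2⟩ := idx_of_good S.hn S.hj2 S.hje S.hke S.hk2 hb ⟨s, hs⟩
    refine ⟨⟨s', hs'⟩, ?_⟩
    rcases Nat.even_or_odd (i:ℕ) with he | ho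
    · left
      rw [Fin.ext_iff]
      simp only [ireF]
      obtain ⟨c, hc⟩ := he
      omega
    · right
      rw [Fin.ext_iff]
      simp only [iimF]
      obtain ⟨c, hc⟩ := ho
      omega
  · exfalso
    exact last_bad S.hn S.hj2 S.hje S.hke S.hk2 (by rw [← hlast]; exact ⟨s, hs⟩)

lemma fwdF_re (S : Setup n j k) (X : Fin (n-1) → ℝ) (t : Fin (j/2)) :
    (fwdF S X t).re = X (ireF S t) ∧ (fwdF S X t).im = X (iimF S t) := by
  unfold fwdF
  constructor <;> simp

lemma bwd_fwd (S : Setup n j k) (X : Fin (n-1) → ℝ)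
    (hX : ∀ i : Fin (n-1), ¬ goodb k ((i:ℕ)/2) → X i = 0) :
    bwdF S (fwdF S X) = X := by
  funext i
  by_cases hg : goodb k ((i:ℕ)/2)
  · obtain ⟨t, ht | ht⟩ := idx_cases S i hg
    · rw [ht, bwdF_ire, (fwdF_re S X t).1]
    · rw [ht, bwdF_iim, (fwdF_re S X t).2]
  · rw [bwdF_supp S _ i hg, hX i hg]

lemma norm_eq (S : Setup n j k) (X : Fin (n-1) → ℝ)
    (hX : ∀ i : Fin (n-1), ¬ goodb k ((i:ℕ)/2) → X i = 0) :
    ∑ i, (X i)^2 = ∑ t, Complex.normSq (fwdF S X t) := by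
  classical
  have hterm : ∀ t, Complex.normSq (fwdF S X t) = (X (ireF S t))^2 + (X (iimF S t))^2 := by
    intro t
    rw [Complex.normSq_apply, (fwdF_re S X t).1, (fwdF_re S X t).2]
    ring
  rw [Finset.sum_congr rfl (fun t _ => hterm t)]
  set G : Finset (Fin (n-1)) :=
    (Finset.univ.image (ireF S)) ∪ (Finset.univ.image (iimF S)) with hG
  have hsub : ∑ i, (X i)^2 = ∑ i ∈ G, (X i)^2 := by
    symm
    apply Finset.sum_subset (Finset.subset_univ G)
    intro i _ hiG
    have : ¬ goodb k ((i:ℕ)/2) := by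
      intro hg
      obtain ⟨t, ht | ht⟩ := idx_cases S i hg
      · exact hiG (Finset.mem_union_left _ (Finset.mem_image.mpr ⟨t, Finset.mem_univ t, ht.symm⟩))
      · exact hiG (Finset.mem_union_right _ (Finset.mem_image.mpr ⟨t, Finset.mem_univ t, ht.symm⟩))
    rw [hX i this]
    ring
  rw [hsub, hG]
  rw [Finset.sum_union (by
    rw [Finset.disjoint_left]
    intro a ha hb
    obtain ⟨t, _, ht⟩ := Finset.mem_image.mp ha
    obtain ⟨s, _, hs⟩ := Finset.mem_image.mp hb
    exact ireF_ne_iimF S t s (ht.trans hs.symm))]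
  rw [Finset.sum_image (fun t _ s _ h => ireF_inj S h),
    Finset.sum_image (fun t _ s _ h => iimF_inj S h)]
  rw [← Finset.sum_add_distrib]

lemma mulI (c s x y : ℂ) :
    (c*x - s*y) + Complex.I*(s*x + c*y) = (c + s*Complex.I)*(x + Complex.I*y) := by
  linear_combination (-s*y)*Complex.I_sq

lemma equivar (S : Setup n j k) (p : ℕ) (X : Fin (n-1) → ℝ) (t : Fin (j/2)) :
    fwdF S ((Rmat n ^ p).mulVec X) t =
      Complex.exp (((p : ℝ) * th n ((2*(t:ℕ)+1)*(k/2) - 1) : ℝ) * Complex.I) * fwdF S X t := by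
  have hD := S.double t
  have hKB := S.KB t
  have hb : 2*((2*(t:ℕ)+1)*(k/2) - 1)+1 < n-1 := by
    have := (S.idx_bound t).1
    omega
  have hire : ireF S t = ⟨2*((2*(t:ℕ)+1)*(k/2) - 1), by omega⟩ := by
    rw [Fin.ext_iff]; exact ireF_val S t
  have hiim : iimF S t = ⟨2*((2*(t:ℕ)+1)*(k/2) - 1)+1, hb⟩ := by
    rw [Fin.ext_iff]; exact iimF_val S t
  unfold fwdF
  rw [hire, hiim, (pow_mulVec_pair n p X _ hb).1, (pow_mulVec_pair n p X _ hb).2,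
    Complex.exp_mul_I]
  push_cast
  linear_combination
    mulI (Complex.cos ((p:ℂ) * ((th n ((2*(t:ℕ)+1)*(k/2) - 1) : ℝ) : ℂ)))
      (Complex.sin ((p:ℂ) * ((th n ((2*(t:ℕ)+1)*(k/2) - 1) : ℝ) : ℂ)))
      (X ⟨2*((2*(t:ℕ)+1)*(k/2) - 1), by omega⟩ : ℂ)
      (X ⟨2*((2*(t:ℕ)+1)*(k/2) - 1)+1, hb⟩ : ℂ)

end Main4

section Main5

variable {n j k : ℕ}

lemma expE (S : Setup n j k) (t : Fin (j/2)) (l : ℤ) :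
    Complex.exp (((((l % (n:ℤ)).toNat : ℕ) : ℝ) * th n ((2*(t:ℕ)+1)*(k/2) - 1) : ℝ) * Complex.I)
      = Complex.exp (2 * (Real.pi : ℂ) * Complex.I * (l : ℂ) *
          ((2 * ((t:ℕ) : ℂ) + 1) / (2 * (j : ℂ)))) := by
  have hKB := S.KB t
  have hjC : (j : ℂ) ≠ 0 := by
    have := S.hj2
    exact_mod_cast Nat.cast_ne_zero.mpr (by omega)
  have hKC : ((k/2 : ℕ) : ℂ) ≠ 0 := by
    have h1 : k/2 ≠ 0 := by have := S.hk2; omega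
    exact_mod_cast Nat.cast_ne_zero.mpr h1
  have hnnz : (n : ℤ) ≠ 0 := by
    have h4 : 4 ≤ n := by
      calc 4 = 2*2 := rfl
      _ ≤ j*k := Nat.mul_le_mul S.hj2 S.hk2
      _ = n := S.hn.symm
    exact_mod_cast (by omega : n ≠ 0)
  set p : ℕ := (l % (n:ℤ)).toNat with hp
  set q : ℤ := l / (n:ℤ) with hq
  have hl : l = (n:ℤ) * q + (p:ℤ) := by
    rw [hp, hq, Int.toNat_of_nonneg (Int.emod_nonneg l hnnz)]
    exact (Int.mul_ediv_add_emod l (n:ℤ)).symm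
  have hlC : (l : ℂ) = (n:ℂ) * (q:ℂ) + (p:ℂ) := by exact_mod_cast congrArg (Int.cast : ℤ → ℂ) hl
  -- the angle
  have hb1 : ((2*(t:ℕ)+1)*(k/2) - 1) + 1 = (2*(t:ℕ)+1)*(k/2) := by omega
  have hnn : n = j * (2 * (k/2)) := by
    have hkK : k = 2 * (k/2) := by obtain ⟨K0, hK0⟩ := S.hke; have := S.hk2; omega
    rw [S.hn]
    conv_lhs => rw [hkK]
  have hthR : th n ((2*(t:ℕ)+1)*(k/2) - 1)
      = 2 * Real.pi * (((2*(t:ℕ)+1)*(k/2) : ℕ) : ℝ) / ((j:ℝ) * (2 * ((k/2:ℕ):ℝ))) := by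
    unfold th
    have h1 : ((((2*(t:ℕ)+1)*(k/2) - 1 : ℕ)) : ℝ) + 1 = (((2*(t:ℕ)+1)*(k/2) : ℕ) : ℝ) := by
      exact_mod_cast congrArg (Nat.cast : ℕ → ℝ) hb1
    have h2 : (n : ℝ) = (j:ℝ) * (2 * ((k/2:ℕ):ℝ)) := by rw [hnn]; push_cast; ring
    rw [h1, h2]
  have hthC : ((th n ((2*(t:ℕ)+1)*(k/2) - 1) : ℝ) : ℂ)
      = 2 * (Real.pi:ℂ) * ((2*((t:ℕ):ℂ)+1) * ((k/2:ℕ):ℂ)) / ((j:ℂ) * (2 * ((k/2:ℕ):ℂ))) := by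
    rw [hthR]
    push_cast
    ring
  obtain ⟨K, hKeq⟩ : ∃ K : ℕ, K = k/2 := ⟨_, rfl⟩
  have hnC : (n:ℂ) = 2*(j:ℂ)*(K:ℂ) := by rw [hnn, hKeq]; push_cast; ring
  rw [hnC] at hlC
  rw [← hKeq] at hthC hKC
  rw [← hKeq]
  rw [Complex.exp_eq_exp_iff_exists_int]
  refine ⟨-(q * (2*(t:ℕ)+1) * (K:ℤ)), ?_⟩
  push_cast
  rw [hthC, hlC]
  field_simp
  ring

lemma expShift {n j k : ℕ} (S : Setup n j k) (t : Fin (j/2)) (l : ℤ) :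
    Complex.exp (2 * (Real.pi : ℂ) * Complex.I * ((l + (j:ℤ) : ℤ) : ℂ) *
        ((2 * ((t:ℕ) : ℂ) + 1) / (2 * (j : ℂ))))
      = - Complex.exp (2 * (Real.pi : ℂ) * Complex.I * (l : ℂ) *
          ((2 * ((t:ℕ) : ℂ) + 1) / (2 * (j : ℂ)))) := by
  have hjC : (j : ℂ) ≠ 0 := by
    have := S.hj2
    exact_mod_cast Nat.cast_ne_zero.mpr (by omega)
  have hsplit : 2 * (Real.pi : ℂ) * Complex.I * ((l:ℂ) + (j:ℂ)) *
      ((2 * ((t:ℕ) : ℂ) + 1) / (2 * (j : ℂ)))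
      = 2 * (Real.pi : ℂ) * Complex.I * (l : ℂ) * ((2 * ((t:ℕ) : ℂ) + 1) / (2 * (j : ℂ)))
        + ((2*(t:ℕ)+1 : ℕ) : ℂ) * (Real.pi * Complex.I) := by
    field_simp
    push_cast; ring
  push_cast
  rw [hsplit, Complex.exp_add, Complex.exp_nat_mul, Complex.exp_pi_mul_I,
    Odd.neg_one_pow ⟨(t:ℕ), by omega⟩]
  ring

end Main5

/-- `ℓ₋^j(n) = {X ∈ S^{n-2} : ℛ_n^j X = −X}` as a subspace of `ℝ^{n-1}`. -/
abbrev ellMinus (n j : ℕ) : Type :=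
  {X : Fin (n - 1) → ℝ // (∑ i, (X i) ^ 2 = 1) ∧ (Rmat n ^ j).mulVec X = -X}

/-- The relation `X ≈ Y` on `ℓ₋^j(n)`: `Y = ±ℛ_n^l X` for some `l ∈ ℤ`. -/
def apxRelMinus (n j : ℕ) (X Y : ellMinus n j) : Prop :=
  ∃ (l : ℤ) (ε : ℝ), (ε = 1 ∨ ε = -1) ∧
    (Y : Fin (n - 1) → ℝ) = ε • ((Rmat n ^ l).mulVec (X : Fin (n - 1) → ℝ))

/-- The relation `z ≈_H w` on the unit sphere `S^{j-1} ⊆ ℂ^{j/2}`: `w = H^l(z)` for some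
`l ∈ ℤ`, where `H` multiplies the `t`-th coordinate (0-indexed) by `e^{2πi(2t+1)/(2j)}`,
so `H^l` multiplies it by `e^{2πi·l·(2t+1)/(2j)}`. -/
def lensRelH (j : ℕ)
    (z w : {v : Fin (j / 2) → ℂ // ∑ t, Complex.normSq (v t) = 1}) : Prop :=
  ∃ l : ℤ, ∀ t : Fin (j / 2),
    (w : Fin (j / 2) → ℂ) t =
      Complex.exp (2 * Real.pi * Complex.I * (l : ℂ) *
        ((2 * ((t : ℕ) : ℂ) + 1) / (2 * (j : ℂ)))) *
        (z : Fin (j / 2) → ℂ) t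

section Final

variable {n j k : ℕ}

lemma fwdF_smul (S : Setup n j k) (ε : ℝ) (V : Fin (n-1) → ℝ) (t : Fin (j/2)) :
    fwdF S (ε • V) t = (ε : ℂ) * fwdF S V t := by
  unfold fwdF
  simp only [Pi.smul_apply, smul_eq_mul]
  push_cast
  ring

/-- helper for quotient homeomorphism -/
def quotHomeomorph {α β : Type*} [TopologicalSpace α] [TopologicalSpace β]
    {r : α → α → Prop} {s : β → β → Prop} (e : α ≃ β)
    (hc : Continuous e) (hc' : Continuous e.symm)
    (h : ∀ a b, r a b ↔ s (e a) (e b)) : Quot r ≃ₜ Quot s where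
  toEquiv := Quot.congr e h
  continuous_toFun := continuous_quot_lift _ (continuous_quot_mk.comp hc)
  continuous_invFun := continuous_quot_lift _ (continuous_quot_mk.comp hc')

/-- For a proper divisor `j` of `n` with both `j` and `k = n/j` even, the
quotient `ℓ₋^j(n)/⟨ℛ_n, ν⟩` is homeomorphic to the orbifold lens space
`L_{2j}(1, 3, 5, …, j−1) = S^{j-1}/⟨H⟩`. -/
theorem ellMinus_quotient_homeomorph_lens (n j k : ℕ) (hn : 3 ≤ n) (hj1 : 1 ≤ j)
    (hjn : j < n) (hdvd : j ∣ n) (hk : k = n / j) (hjeven : Even j) (hkeven : Even k) :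
    Nonempty (Quot (apxRelMinus n j) ≃ₜ Quot (lensRelH j)) := by
  classical
  -- setup
  have hnjk : n = j * k := by
    rw [hk, Nat.mul_div_cancel' hdvd]
  have hj2 : 2 ≤ j := by
    obtain ⟨a, ha⟩ := hjeven
    omega
  have hk0 : k ≠ 0 := by
    intro h0
    rw [h0, mul_zero] at hnjk
    omega
  have hk2 : 2 ≤ k := by
    obtain ⟨a, ha⟩ := hkeven
    omega
  have S : Setup n j k := ⟨hnjk, hj2, hjeven, hk2, hkeven⟩
  have hn2 : 2 ≤ n := by omega
  have hne : Even n := by rw [hnjk]; exact hkeven.mul_left j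
  -- the equivalence between ellMinus and the sphere
  have hsupp : ∀ X : ellMinus n j, ∀ i : Fin (n-1), ¬ goodb k ((i:ℕ)/2) → (X : Fin (n-1) → ℝ) i = 0 :=
    fun X => (char_support hnjk hj2 hjeven hkeven hk2 _).mp X.2.2
  let e : ellMinus n j ≃ {v : Fin (j / 2) → ℂ // ∑ t, Complex.normSq (v t) = 1} :=
  { toFun := fun X => ⟨fwdF S X.1, by rw [← norm_eq S X.1 (hsupp X)]; exact X.2.1⟩
    invFun := fun v => ⟨bwdF S v.1, by
      constructor
      · rw [norm_eq S (bwdF S v.1) (fun i => bwdF_supp S v.1 i)]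
        rw [Finset.sum_congr rfl (fun t _ => by rw [fwd_bwd S v.1 t])]
        exact v.2
      · exact (char_support hnjk hj2 hjeven hkeven hk2 _).mpr
          (fun i => bwdF_supp S v.1 i)⟩
    left_inv := fun X => Subtype.ext (bwd_fwd S X.1 (hsupp X))
    right_inv := fun v => Subtype.ext (funext (fwd_bwd S v.1)) }
  -- the relations correspond
  have hrel : ∀ X Y : ellMinus n j, apxRelMinus n j X Y ↔ lensRelH j (e X) (e Y) := by
    intro X Y
    constructor
    · rintro ⟨l, ε, hε, hYeq⟩
      have hp : Rmat n ^ l = Rmat n ^ ((l % (n:ℤ)).toNat) := Rmat_zpow_eq n hn2 hne l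
      rcases hε with hε | hε
      · refine ⟨l, fun t => ?_⟩
        show fwdF S Y.1 t = _ * fwdF S X.1 t
        rw [show Y.1 = ε • ((Rmat n ^ l).mulVec X.1) from hYeq, hε, one_smul, hp,
          equivar S _ X.1 t, expE S t l]
      · refine ⟨l + (j:ℤ), fun t => ?_⟩
        show fwdF S Y.1 t = _ * fwdF S X.1 t
        rw [show Y.1 = ε • ((Rmat n ^ l).mulVec X.1) from hYeq, hε, fwdF_smul, hp,
          equivar S _ X.1 t, expE S t l, expShift S t l]
        push_cast
        ring
    · rintro ⟨l, hw⟩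
      refine ⟨l, 1, Or.inl rfl, ?_⟩
      rw [one_smul, Rmat_zpow_eq n hn2 hne l]
      funext i
      by_cases hg : goodb k ((i:ℕ)/2)
      · obtain ⟨t, ht⟩ := idx_cases S i hg
        have hC : fwdF S Y.1 t = fwdF S ((Rmat n ^ ((l % (n:ℤ)).toNat)).mulVec X.1) t := by
          rw [equivar S _ X.1 t, expE S t l]
          exact hw t
        rcases ht with ht | ht
        · rw [ht, ← (fwdF_re S Y.1 t).1, hC,
            (fwdF_re S ((Rmat n ^ ((l % (n:ℤ)).toNat)).mulVec X.1) t).1]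
        · rw [ht, ← (fwdF_re S Y.1 t).2, hC,
            (fwdF_re S ((Rmat n ^ ((l % (n:ℤ)).toNat)).mulVec X.1) t).2]
      · rw [hsupp Y i hg, supp_mulVec_zero hnjk hj2 hjeven hkeven hk2 X.1 (hsupp X) _ i hg]
  -- continuity
  have hcont1 : Continuous e := by
    apply Continuous.subtype_mk
    apply continuous_pi
    intro t
    exact ((Complex.continuous_ofReal.comp ((continuous_apply _).comp
      continuous_subtype_val))).add (continuous_const.mul
      (Complex.continuous_ofReal.comp ((continuous_apply _).comp continuous_subtype_val)))
  have hcont2 : Continuous e.symm := by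
    apply Continuous.subtype_mk
    apply continuous_pi
    intro i
    apply continuous_finset_sum
    intro t _
    exact ((Complex.continuous_re.comp ((continuous_apply t).comp
      continuous_subtype_val)).mul continuous_const).add
      ((Complex.continuous_im.comp ((continuous_apply t).comp
      continuous_subtype_val)).mul continuous_const)
  exact ⟨quotHomeomorph e hcont1 hcont2 hrel⟩

end Final
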